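/- For any two pure states |ψ⟩, |φ⟩ and Hermitian H, |F_Q[|ψ⟩;H] − F_Q[|φ⟩;H]| ≤ 24·√(1 − |⟨ψ|φ⟩|²)·‖H‖², where F_Q[|ψ⟩;H] = 4(⟨ψ|H²|ψ⟩ − ⟨ψ|H|ψ⟩²). -/

import Mathlib

open scoped BigOperators ComplexConjugate ComplexOrder Matrix

noncomputable section

/-- The rank-one projector `|ψ⟩⟨ψ|` as a matrix. -/
def projv {ι : Type*} [Fintype ι] (ψ : ι → ℂ) : Matrix ι ι ℂ :=
  Matrix.vecMulVec ψ (star ψ)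

/-- The inner product `⟨ψ|φ⟩`. -/
def ipc {ι : Type*} [Fintype ι] (ψ φ : ι → ℂ) : ℂ :=
  dotProduct (star ψ) φ

-- Square root of a positive semidefinite matrix (junk value `0` otherwise).
open Classical in
def msqrt {ι : Type*} [Fintype ι] [DecidableEq ι] (A : Matrix ι ι ℂ) : Matrix ι ι ℂ :=
  if h : A.PosSemidef then
    (h.1.eigenvectorUnitary : Matrix ι ι ℂ) *
      Matrix.diagonal ((↑) ∘ (√·) ∘ h.1.eigenvalues) *
      (star h.1.eigenvectorUnitary : Matrix ι ι ℂ)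
  else 0

/-- Trace norm `‖X‖₁ = Tr √(X†X)`. -/
def traceNorm {ι : Type*} [Fintype ι] [DecidableEq ι] (A : Matrix ι ι ℂ) : ℝ :=
  (msqrt (Aᴴ * A)).trace.re

/-- Uhlmann fidelity `F(ρ,σ) = Tr √(√σ ρ √σ)`. -/
def fid {ι : Type*} [Fintype ι] [DecidableEq ι] (ρ σ : Matrix ι ι ℂ) : ℝ :=
  (msqrt (msqrt σ * ρ * msqrt σ)).trace.re

/-- Operator (spectral) norm of a matrix. -/
def opNorm {ι : Type*} [Fintype ι] [DecidableEq ι] (A : Matrix ι ι ℂ) : ℝ :=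
  ‖Matrix.toEuclideanCLM (𝕜 := ℂ) A‖

/-- Expectation value `⟨ψ|H|ψ⟩` (real part). -/
def exval {ι : Type*} [Fintype ι] (ψ : ι → ℂ) (H : Matrix ι ι ℂ) : ℝ :=
  (ipc ψ (H.mulVec ψ)).re

/-- Pure-state quantum Fisher information `4(⟨H²⟩ - ⟨H⟩²)`. -/
def QFIpure {ι : Type*} [Fintype ι] (ψ : ι → ℂ) (H : Matrix ι ι ℂ) : ℝ :=
  4 * (exval ψ (H * H) - (exval ψ H) ^ 2)

/-- Density matrix predicate. -/
def IsDensity {ι : Type*} [Fintype ι] [DecidableEq ι] (ρ : Matrix ι ι ℂ) : Prop :=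
  ρ.PosSemidef ∧ ρ.trace = 1

/-!
Polarising, `2 (⟪u, T u⟫ - ⟪v, T v⟫) = ⟪u + v, T (u - v)⟫ + ⟪u - v, T (u + v)⟫`, so an
expectation value moves by at most `‖T‖ ‖u + v‖ ‖u - v‖`. For unit vectors whose relative phase
is chosen to make `⟪u, v⟫ = |⟪u, v⟫|` real, this product is `2 √(1 - |⟪u, v⟫|²)`, the trace
distance of the two pure states. Applying this to `H²` (with `‖H²‖ ≤ ‖H‖²`) and to
`⟨H⟩² - ⟨H⟩'² = (⟨H⟩ + ⟨H⟩')(⟨H⟩ - ⟨H⟩')` (with `|⟨H⟩| ≤ ‖H‖`) bounds the two parts of the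
change of `F_Q / 4` by `2` and `4` times `√(1 - |⟨ψ|φ⟩|²) ‖H‖²`.
-/

section ExpectationContinuity

open RCLike
open scoped InnerProductSpace

variable {𝕜 E : Type*} [RCLike 𝕜] [NormedAddCommGroup E] [InnerProductSpace 𝕜 E]

lemma two_mul_inner_map_self_sub_inner_map_self (T : E →L[𝕜] E) (u v : E) :
    2 * (⟪u, T u⟫_𝕜 - ⟪v, T v⟫_𝕜) = ⟪u + v, T (u - v)⟫_𝕜 + ⟪u - v, T (u + v)⟫_𝕜 := by
  simp only [map_add, map_sub, inner_add_left, inner_sub_left, inner_add_right, inner_sub_right]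
  ring

lemma norm_inner_map_self_sub_inner_map_self_le (T : E →L[𝕜] E) (u v : E) :
    ‖⟪u, T u⟫_𝕜 - ⟪v, T v⟫_𝕜‖ ≤ ‖T‖ * (‖u + v‖ * ‖u - v‖) := by
  have bound (x y : E) : ‖⟪x, T y⟫_𝕜‖ ≤ ‖x‖ * (‖T‖ * ‖y‖) :=
    (norm_inner_le_norm x (T y)).trans (by gcongr; exact T.le_opNorm y)
  have h := congrArg norm (two_mul_inner_map_self_sub_inner_map_self T u v)
  rw [norm_mul, RCLike.norm_two] at h
  have := (norm_add_le _ _).trans (add_le_add (bound (u + v) (u - v)) (bound (u - v) (u + v)))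
  linarith

lemma norm_add_mul_norm_sub_of_norm_eq_one {u v : E} (hu : ‖u‖ = 1) (hv : ‖v‖ = 1) :
    ‖u + v‖ * ‖u - v‖ = 2 * √(1 - re ⟪u, v⟫_𝕜 ^ 2) := by
  have hprod : (‖u + v‖ * ‖u - v‖) ^ 2 = 2 ^ 2 * (1 - re ⟪u, v⟫_𝕜 ^ 2) := by
    rw [mul_pow, norm_add_sq (𝕜 := 𝕜), norm_sub_sq (𝕜 := 𝕜), hu, hv]
    ring
  rw [← Real.sqrt_sq (by positivity : 0 ≤ ‖u + v‖ * ‖u - v‖), hprod,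
    Real.sqrt_mul' _ (by nlinarith [sq_nonneg (‖u + v‖ * ‖u - v‖)]),
    Real.sqrt_sq zero_le_two]

lemma exists_norm_eq_one_mul_eq_norm (w : 𝕜) : ∃ z : 𝕜, ‖z‖ = 1 ∧ z * w = ‖w‖ := by
  rcases eq_or_ne w 0 with rfl | hw
  · exact ⟨1, norm_one, by simp⟩
  · refine ⟨‖w‖ / w, ?_, div_mul_cancel₀ _ hw⟩
    rw [norm_div, norm_ofReal, abs_norm, div_self (norm_ne_zero_iff.mpr hw)]

lemma inner_smul_map_smul_self {z : 𝕜} (hz : ‖z‖ = 1) (T : E →L[𝕜] E) (v : E) :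
    ⟪z • v, T (z • v)⟫_𝕜 = ⟪v, T v⟫_𝕜 := by
  rw [map_smul, inner_smul_left, inner_smul_right, ← mul_assoc, RCLike.conj_mul, hz,
    ofReal_one, one_pow, one_mul]

theorem norm_inner_map_self_sub_inner_map_self_le_of_norm_eq_one (T : E →L[𝕜] E) {u v : E}
    (hu : ‖u‖ = 1) (hv : ‖v‖ = 1) :
    ‖⟪u, T u⟫_𝕜 - ⟪v, T v⟫_𝕜‖ ≤ 2 * ‖T‖ * √(1 - ‖⟪u, v⟫_𝕜‖ ^ 2) := by
  obtain ⟨z, hz, hphase⟩ := exists_norm_eq_one_mul_eq_norm ⟪u, v⟫_𝕜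
  have hzv : ‖z • v‖ = 1 := by rw [norm_smul, hz, hv, one_mul]
  have hre : re ⟪u, z • v⟫_𝕜 = ‖⟪u, v⟫_𝕜‖ := by rw [inner_smul_right, hphase, ofReal_re]
  calc ‖⟪u, T u⟫_𝕜 - ⟪v, T v⟫_𝕜‖
      = ‖⟪u, T u⟫_𝕜 - ⟪z • v, T (z • v)⟫_𝕜‖ := by rw [inner_smul_map_smul_self hz]
    _ ≤ ‖T‖ * (‖u + z • v‖ * ‖u - z • v‖) := norm_inner_map_self_sub_inner_map_self_le T u _
    _ = 2 * ‖T‖ * √(1 - ‖⟪u, v⟫_𝕜‖ ^ 2) := by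
      rw [norm_add_mul_norm_sub_of_norm_eq_one (𝕜 := 𝕜) hu hzv, hre]
      ring

end ExpectationContinuity

section PureState

open scoped InnerProductSpace

variable {ι : Type*} [Fintype ι]

lemma ipc_eq_inner (x y : ι → ℂ) : ipc x y = ⟪WithLp.toLp 2 x, WithLp.toLp 2 y⟫_ℂ := by
  rw [EuclideanSpace.inner_toLp_toLp, ipc, dotProduct_comm]

lemma norm_toLp_of_ipc_self_eq_one {x : ι → ℂ} (hx : ipc x x = 1) : ‖WithLp.toLp 2 x‖ = 1 := by
  rw [← pow_eq_one_iff_of_nonneg (norm_nonneg _) two_ne_zero, ← inner_self_eq_norm_sq (𝕜 := ℂ),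
    ← ipc_eq_inner, hx, RCLike.one_re]

variable [DecidableEq ι]

lemma exval_eq_re_inner (x : ι → ℂ) (A : Matrix ι ι ℂ) :
    exval x A = (⟪WithLp.toLp 2 x, Matrix.toEuclideanCLM (𝕜 := ℂ) A (WithLp.toLp 2 x)⟫_ℂ).re := by
  rw [Matrix.toEuclideanCLM_toLp, ← ipc_eq_inner, exval]

lemma opNorm_mul_le (A B : Matrix ι ι ℂ) : opNorm (A * B) ≤ opNorm A * opNorm B := by
  simp only [opNorm, map_mul]
  exact norm_mul_le _ _

lemma abs_exval_le {x : ι → ℂ} (hx : ipc x x = 1) (A : Matrix ι ι ℂ) :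
    |exval x A| ≤ opNorm A := by
  rw [exval_eq_re_inner]
  refine (Complex.abs_re_le_norm _).trans ((norm_inner_le_norm _ _).trans ?_)
  have hle := (Matrix.toEuclideanCLM (𝕜 := ℂ) A).le_opNorm (WithLp.toLp 2 x)
  rw [norm_toLp_of_ipc_self_eq_one hx, mul_one] at hle
  rwa [norm_toLp_of_ipc_self_eq_one hx, one_mul]

lemma abs_exval_sub_exval_le {x y : ι → ℂ} (hx : ipc x x = 1) (hy : ipc y y = 1)
    (A : Matrix ι ι ℂ) :
    |exval x A - exval y A| ≤ 2 * opNorm A * √(1 - ‖ipc x y‖ ^ 2) := by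
  rw [exval_eq_re_inner, exval_eq_re_inner, ← Complex.sub_re, ipc_eq_inner]
  exact (Complex.abs_re_le_norm _).trans
    (norm_inner_map_self_sub_inner_map_self_le_of_norm_eq_one _
      (norm_toLp_of_ipc_self_eq_one hx) (norm_toLp_of_ipc_self_eq_one hy))

end PureState

theorem QFIpure_continuity_fidelity_general {n : ℕ} (ψ φ : Fin n → ℂ)
    (hψ : ipc ψ ψ = 1) (hφ : ipc φ φ = 1)
    (H : Matrix (Fin n) (Fin n) ℂ) :
    |QFIpure ψ H - QFIpure φ H| ≤ 24 * Real.sqrt (1 - ‖ipc ψ φ‖ ^ 2) * opNorm H ^ 2 := by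
  set D := √(1 - ‖ipc ψ φ‖ ^ 2)
  set N := opNorm H
  have hD : 0 ≤ D := Real.sqrt_nonneg _
  have hN : 0 ≤ N := norm_nonneg _
  have hsecond : |exval ψ (H * H) - exval φ (H * H)| ≤ 2 * N ^ 2 * D :=
    (abs_exval_sub_exval_le hψ hφ _).trans (by gcongr; rw [sq]; exact opNorm_mul_le H H)
  have hfirst : |exval ψ H ^ 2 - exval φ H ^ 2| ≤ 4 * N ^ 2 * D := by
    have hsum : |exval ψ H + exval φ H| ≤ 2 * N :=
      (abs_add_le _ _).trans (by linarith [abs_exval_le hψ H, abs_exval_le hφ H])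
    rw [sq_sub_sq, abs_mul]
    calc |exval ψ H + exval φ H| * |exval ψ H - exval φ H|
        ≤ 2 * N * (2 * N * D) := by
          gcongr
          exact abs_exval_sub_exval_le hψ hφ H
      _ = 4 * N ^ 2 * D := by ring
  calc |QFIpure ψ H - QFIpure φ H|
      = 4 * |(exval ψ (H * H) - exval φ (H * H)) - (exval ψ H ^ 2 - exval φ H ^ 2)| := by
        rw [QFIpure, QFIpure, ← mul_sub, abs_mul, abs_of_pos four_pos]; ring_nf
    _ ≤ 4 * (2 * N ^ 2 * D + 4 * N ^ 2 * D) := by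
        gcongr
        exact (abs_sub _ _).trans (add_le_add hsecond hfirst)
    _ = 24 * D * N ^ 2 := by ring

/-- continuity of the pure-state QFI in fidelity:
`|F_Q[ψ;H] − F_Q[φ;H]| ≤ 24 √(1 − |⟨ψ|φ⟩|²) ‖H‖²`. -/
theorem QFIpure_continuity_fidelity {n : ℕ} (ψ φ : Fin n → ℂ)
    (hψ : ipc ψ ψ = 1) (hφ : ipc φ φ = 1)
    (H : Matrix (Fin n) (Fin n) ℂ) (hH : H.IsHermitian) :
    |QFIpure ψ H - QFIpure φ H| ≤ 24 * Real.sqrt (1 - ‖ipc ψ φ‖ ^ 2) * opNorm H ^ 2 :=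
  QFIpure_continuity_fidelity_general ψ φ hψ hφ H
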